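/- Let s be a binary string of length n, w of length m ≤ n, N = n−m+1, and 0 < ε < 1. Let P be a set of at least N·m/ε distinct primes. If p is chosen uniformly from P, then the probability that there exists i ∈ {1,...,N} with s[i,i+m−1] ≠ w but h_p(s[i,i+m−1]) = h_p(w) is at most ε. -/

import Mathlib

def bval (b : Bool) : ℕ := if b then 1 else 0

def val : List Bool → ℕ
  | [] => 0
  | b :: t => bval b + 2 * val t

def hashp (p : ℕ) (u : List Bool) : ℕ := val u % p

def substr (s : List Bool) (i m : ℕ) : List Bool := (s.drop (i - 1)).take m

/-!
A window `u ≠ w` collides with `w` under `h_p` exactly when `p` divides `val u - val w`, a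
nonzero integer of absolute value `< 2^m`; such an integer has at most `m` prime factors, since
their product already bounds it from below by `2^(number of factors)`. A union bound over the
`N` windows gives at most `N·m` bad primes in `P`, a fraction at most `ε` of `P`.
-/

lemma val_lt_two_pow_length (u : List Bool) : val u < 2 ^ u.length := by
  induction u with
  | nil => simp [val]
  | cons b t ih =>
    simp only [val, List.length_cons, pow_succ]
    cases b <;> simp only [bval, Bool.false_eq_true, if_true, if_false] <;> omega

lemma eq_of_length_eq_of_val_eq {u v : List Bool} (hlen : u.length = v.length)
    (hval : val u = val v) : u = v := by
  induction u generalizing v with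
  | nil => simpa [eq_comm] using hlen
  | cons b t ih =>
    cases v with
    | nil => simp at hlen
    | cons c r =>
      simp only [val] at hval
      have hbc : b = c := by
        cases b <;> cases c <;>
          simp only [bval, Bool.false_eq_true, if_true, if_false] at hval ⊢ <;> omega
      subst hbc
      rw [ih (by simpa using hlen) (by omega)]

lemma Nat.card_primeFactors_le_of_lt_two_pow {d m : ℕ} (hd : d ≠ 0) (hlt : d < 2 ^ m) :
    d.primeFactors.card ≤ m := by
  have hpow : 2 ^ d.primeFactors.card ≤ d :=
    calc 2 ^ d.primeFactors.card ≤ ∏ p ∈ d.primeFactors, p :=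
          Finset.pow_card_le_prod _ _ _ fun p hp => (Nat.prime_of_mem_primeFactors hp).two_le
      _ ≤ d := Nat.le_of_dvd (Nat.pos_of_ne_zero hd) (Nat.prod_primeFactors_dvd d)
  exact ((Nat.pow_lt_pow_iff_right one_lt_two).mp (hpow.trans_lt hlt)).le

lemma card_filter_hashp_eq_le {P : Finset ℕ} (hP : ∀ p ∈ P, p.Prime) {u v : List Bool}
    (hlen : u.length = v.length) (hne : u ≠ v) :
    (P.filter fun p => hashp p u = hashp p v).card ≤ u.length := by
  set d := ((val v : ℤ) - val u).natAbs
  have hu := val_lt_two_pow_length u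
  have hv := val_lt_two_pow_length v
  rw [← hlen] at hv
  have hd : d ≠ 0 := by
    have : val u ≠ val v := fun h => hne (eq_of_length_eq_of_val_eq hlen h)
    omega
  calc (P.filter fun p => hashp p u = hashp p v).card ≤ d.primeFactors.card := by
        refine Finset.card_le_card fun p hp => ?_
        obtain ⟨hpP, hcoll⟩ := Finset.mem_filter.mp hp
        have hdvd : p ∣ d := Int.natCast_dvd.mp (Nat.ModEq.dvd hcoll)
        exact Nat.mem_primeFactors.mpr ⟨hP p hpP, hdvd, hd⟩
    _ ≤ u.length := Nat.card_primeFactors_le_of_lt_two_pow hd (by omega)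

lemma length_substr {s : List Bool} {i m : ℕ} (hi : 1 ≤ i) (hlen : i + m ≤ s.length + 1) :
    (substr s i m).length = m := by
  simp only [substr, List.length_take, List.length_drop]
  omega

open Classical in
lemma card_filter_exists_collision_le {P : Finset ℕ} (hP : ∀ p ∈ P, p.Prime)
    (s w : List Bool) {N : ℕ} (hN : N + w.length ≤ s.length + 1) :
    (P.filter fun p => ∃ i, 1 ≤ i ∧ i ≤ N ∧ substr s i w.length ≠ w ∧
        hashp p (substr s i w.length) = hashp p w).card ≤ N * w.length := by
  set bad := (Finset.Icc 1 N).filter fun i => substr s i w.length ≠ w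
  calc _ ≤ (bad.biUnion fun i => P.filter fun p =>
          hashp p (substr s i w.length) = hashp p w).card := by
        refine Finset.card_le_card fun p hp => ?_
        obtain ⟨hpP, i, hi1, hiN, hne, hcoll⟩ := Finset.mem_filter.mp hp
        exact Finset.mem_biUnion.mpr
          ⟨i, Finset.mem_filter.mpr ⟨Finset.mem_Icc.mpr ⟨hi1, hiN⟩, hne⟩,
            Finset.mem_filter.mpr ⟨hpP, hcoll⟩⟩
    _ ≤ bad.card * w.length := by
        refine Finset.card_biUnion_le_card_mul _ _ _ fun i hi => ?_
        obtain ⟨hiIcc, hne⟩ := Finset.mem_filter.mp hi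
        obtain ⟨hi1, hiN⟩ := Finset.mem_Icc.mp hiIcc
        have hlen : (substr s i w.length).length = w.length := length_substr hi1 (by omega)
        simpa [hlen] using card_filter_hashp_eq_le hP hlen hne
    _ ≤ (Finset.Icc 1 N).card * w.length := Nat.mul_le_mul_right _ (Finset.card_filter_le _ _)
    _ = N * w.length := by rw [Nat.card_Icc, Nat.add_sub_cancel]

open Classical in
theorem stmt_10_general (s w : List Bool) (n m N : ℕ)
    (hn : s.length = n) (hm : w.length = m) (hmn : m ≤ n) (hN : N = n - m + 1)
    (ε : ℝ) (hε0 : 0 < ε)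
    (P : Finset ℕ) (hP : ∀ p ∈ P, p.Prime)
    (hcard : ((N * m : ℕ) : ℝ) / ε ≤ (P.card : ℝ)) :
    ((P.filter fun p =>  ∃ i, 1 ≤ i ∧ i ≤ N ∧ substr s i m ≠ w ∧
        hashp p (substr s i m) = hashp p w).card : ℝ) / (P.card : ℝ) ≤ ε := by
  subst hm
  have hbad := card_filter_exists_collision_le hP s w (N := N) (by omega)
  refine div_le_of_le_mul₀ (Nat.cast_nonneg _) hε0.le ?_
  calc _ ≤ ((N * w.length : ℕ) : ℝ) := by exact_mod_cast hbad
    _ ≤ ε * P.card := by rw [div_le_iff₀ hε0] at hcard; linarith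

open Classical in
theorem stmt_10 (s w : List Bool) (n m N : ℕ)
    (hn : s.length = n) (hm : w.length = m) (hmn : m ≤ n) (hN : N = n - m + 1)
    (ε : ℝ) (hε0 : 0 < ε) (hε1 : ε < 1)
    (P : Finset ℕ) (hP : ∀ p ∈ P, p.Prime)
    (hcard : ((N * m : ℕ) : ℝ) / ε ≤ (P.card : ℝ)) :
    ((P.filter fun p =>  ∃ i, 1 ≤ i ∧ i ≤ N ∧ substr s i m ≠ w ∧
        hashp p (substr s i m) = hashp p w).card : ℝ) / (P.card : ℝ) ≤ ε :=
  stmt_10_general s w n m N hn hm hmn hN ε hε0 P hP hcard
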